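/- arXiv:2210.06143 — 4 statements merged into one kernel-verified Lean document; each statement's English description precedes it below -/
import Mathlib

section
/- (Herbst theorem) Suppose F is a random variable such that for all λ > 0, Ent[e^{λF}] ≤ (λ²σ²/2) E[e^{λF}]. Then for all λ > 0, (1/λ) log E[e^{λF}] ≤ E[F] + λσ²/2. -/
/-! Let `K(t) = log E[e^{tF}] / t`. Differentiating, `K'(t) = Ent[e^{tF}] / (t² E[e^{tF}])`,
so the entropy bound says `K' ≤ σ²/2`, i.e. `K(t) - tσ²/2` is antitone on `(0, ∞)`. As `t → 0⁺`,
`K(t) ≤ (E[e^{tF}] - 1)/t → E[F]` by dominated convergence (the difference quotients of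
`t ↦ e^{ty}` are monotone in `t` by convexity), which bounds `K(l) - lσ²/2` by `E[F]`. -/

open MeasureTheory Real Filter Topology Set

lemma le_exp_mul_sub_one_div {a : ℝ} (ha : 0 < a) (y : ℝ) : y ≤ (exp (a * y) - 1) / a := by
  rw [le_div_iff₀ ha]
  linarith [add_one_le_exp (a * y)]

lemma exp_mul_sub_one_div_le {a l : ℝ} (ha : 0 < a) (hal : a ≤ l) (y : ℝ) :
    (exp (a * y) - 1) / a ≤ (exp (l * y) - 1) / l := by
  have hconv : ConvexOn ℝ univ (fun t : ℝ ↦ exp (t * y)) :=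
    convexOn_exp.comp_linearMap (LinearMap.smulRight LinearMap.id y)
  simpa using hconv.secant_mono (a := 0) (mem_univ _) (mem_univ a) (mem_univ l) ha.ne'
    (ha.trans_le hal).ne' hal

lemma tendsto_exp_mul_sub_one_div (y : ℝ) :
    Tendsto (fun a ↦ (exp (a * y) - 1) / a) (𝓝[>] 0) (𝓝 y) := by
  have h : HasDerivAt (fun a ↦ exp (a * y)) y 0 := by
    simpa using (hasDerivAt_mul_const y (x := 0)).exp
  simpa [div_eq_inv_mul] using h.tendsto_slope_zero_right

namespace ProbabilityTheory

variable {Ω : Type*} [MeasurableSpace Ω] {μ : Measure Ω} {X : Ω → ℝ}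

noncomputable def funEntropy (μ : Measure Ω) (g : Ω → ℝ) : ℝ :=
  ∫ ω, g ω * log (g ω) ∂μ - (∫ ω, g ω ∂μ) * log (∫ ω, g ω ∂μ)

lemma funEntropy_exp_mul (t : ℝ) :
    funEntropy μ (fun ω ↦ exp (t * X ω))
      = t * μ[fun ω ↦ X ω * exp (t * X ω)] - mgf X μ t * cgf X μ t := by
  simp only [funEntropy, log_exp, mgf, cgf, ← integral_const_mul]
  congr 2
  ext ω
  ring

lemma mem_interior_integrableExpSet_of_pos
    (hexp : ∀ t, 0 < t → Integrable (fun ω ↦ exp (t * X ω)) μ) {t : ℝ} (ht : 0 < t) :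
    t ∈ interior (integrableExpSet X μ) :=
  interior_mono (s := Ioi 0) (fun s hs ↦ hexp s hs) (by rwa [interior_Ioi])

lemma hasDerivAt_cgf_div [NeZero μ] {t : ℝ} (ht : t ∈ interior (integrableExpSet X μ))
    (ht0 : t ≠ 0) :
    HasDerivAt (fun s ↦ cgf X μ s / s)
      (funEntropy μ (fun ω ↦ exp (t * X ω)) / (t ^ 2 * mgf X μ t)) t := by
  have hM : mgf X μ t ≠ 0 :=
    (mgf_pos' (NeZero.ne μ) (interior_subset (s := integrableExpSet X μ) ht)).ne'
  refine (((hasDerivAt_mgf ht).log hM).div (hasDerivAt_id t) ht0).congr_deriv ?_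
  simp only [funEntropy_exp_mul, cgf, id]
  generalize μ[fun ω ↦ X ω * exp (t * X ω)] = D
  field_simp

lemma antitoneOn_cgf_div_sub [NeZero μ] {v : ℝ}
    (hexp : ∀ t, 0 < t → Integrable (fun ω ↦ exp (t * X ω)) μ)
    (hent : ∀ t, 0 < t → funEntropy μ (fun ω ↦ exp (t * X ω)) ≤ t ^ 2 * v / 2 * mgf X μ t) :
    AntitoneOn (fun t ↦ cgf X μ t / t - t * v / 2) (Ioi 0) := by
  have hderiv : ∀ t ∈ Ioi (0 : ℝ), HasDerivAt (fun t ↦ cgf X μ t / t - t * v / 2)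
      (funEntropy μ (fun ω ↦ exp (t * X ω)) / (t ^ 2 * mgf X μ t) - v / 2) t := fun t ht ↦
    ((hasDerivAt_cgf_div (mem_interior_integrableExpSet_of_pos hexp ht) ht.ne').sub
      (((hasDerivAt_id t).mul_const v).div_const 2)).congr_deriv (by ring)
  refine antitoneOn_of_hasDerivWithinAt_nonpos (convex_Ioi 0)
    (fun t ht ↦ (hderiv t ht).continuousAt.continuousWithinAt)
    (fun t ht ↦ (hderiv t (interior_subset ht)).hasDerivWithinAt) fun t ht ↦ ?_
  rw [interior_Ioi, mem_Ioi] at ht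
  have hM := mgf_pos' (NeZero.ne μ) (hexp t ht)
  rw [sub_nonpos, div_le_iff₀ (by positivity)]
  linarith [hent t ht]

lemma tendsto_mgf_sub_one_div_nhdsGT [IsProbabilityMeasure μ] {l : ℝ} (hX : Integrable X μ)
    (hl : 0 < l) (hl_int : Integrable (fun ω ↦ exp (l * X ω)) μ) :
    Tendsto (fun t ↦ (mgf X μ t - 1) / t) (𝓝[>] 0) (𝓝 μ[X]) := by
  have hX_meas := hX.aemeasurable
  have hslope : Tendsto (fun t ↦ ∫ ω, (exp (t * X ω) - 1) / t ∂μ) (𝓝[>] 0) (𝓝 μ[X]) := by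
    refine tendsto_integral_filter_of_dominated_convergence
      (fun ω ↦ |X ω| + |(exp (l * X ω) - 1) / l|) (Eventually.of_forall fun t ↦ ?_) ?_
      (hX.abs.add ((hl_int.sub (integrable_const 1)).div_const l).abs)
      (Eventually.of_forall fun ω ↦ tendsto_exp_mul_sub_one_div (X ω))
    · exact (by fun_prop : AEMeasurable (fun ω ↦ (exp (t * X ω) - 1) / t) μ).aestronglyMeasurable
    · filter_upwards [Ioo_mem_nhdsGT hl] with t ⟨ht, htl⟩
      refine Eventually.of_forall fun ω ↦ ?_
      have hlow := le_exp_mul_sub_one_div ht (X ω)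
      have hup := exp_mul_sub_one_div_le ht htl.le (X ω)
      rw [norm_eq_abs, abs_le]
      constructor <;> linarith [neg_abs_le (X ω), le_abs_self ((exp (l * X ω) - 1) / l),
        abs_nonneg (X ω), abs_nonneg ((exp (l * X ω) - 1) / l)]
  refine hslope.congr' ?_
  filter_upwards [Ioo_mem_nhdsGT hl] with t ⟨ht, htl⟩
  rw [integral_div, integral_sub (integrable_exp_mul_of_nonneg_of_le hl_int ht.le htl.le)
    (integrable_const 1), integral_const]
  simp [mgf]

lemma cgf_div_le_integral_add [IsProbabilityMeasure μ] {v l : ℝ} (hX : Integrable X μ)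
    (hexp : ∀ t, 0 < t → Integrable (fun ω ↦ exp (t * X ω)) μ)
    (hent : ∀ t, 0 < t → funEntropy μ (fun ω ↦ exp (t * X ω)) ≤ t ^ 2 * v / 2 * mgf X μ t)
    (hl : 0 < l) :
    cgf X μ l / l ≤ μ[X] + l * v / 2 := by
  have hlin : Tendsto (fun t : ℝ ↦ t * v / 2) (𝓝[>] 0) (𝓝 0) :=
    tendsto_nhdsWithin_of_tendsto_nhds
      (by simpa using ((continuous_mul_const v).div_const 2).tendsto 0)
  have hlim := (tendsto_mgf_sub_one_div_nhdsGT hX hl (hexp l hl)).sub hlin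
  rw [sub_zero] at hlim
  suffices cgf X μ l / l - l * v / 2 ≤ μ[X] by linarith
  refine ge_of_tendsto hlim ?_
  filter_upwards [Ioo_mem_nhdsGT hl] with t ⟨ht, htl⟩
  calc cgf X μ l / l - l * v / 2 ≤ cgf X μ t / t - t * v / 2 :=
        antitoneOn_cgf_div_sub hexp hent ht (mem_Ioi.2 hl) htl.le
    _ ≤ (mgf X μ t - 1) / t - t * v / 2 := by
        gcongr
        exact log_le_sub_one_of_pos (mgf_pos (hexp t ht))

end ProbabilityTheory

theorem herbst_general {Ω : Type*} [MeasurableSpace Ω]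
    (μ : Measure Ω) [IsProbabilityMeasure μ] (F : Ω → ℝ) (σ : ℝ)
    (hF : Integrable F μ)
    (hmgf : ∀ l : ℝ, 0 < l → Integrable (fun ω => Real.exp (l * F ω)) μ)
    (hEnt : ∀ l : ℝ, 0 < l →
      (∫ ω, Real.exp (l * F ω) * Real.log (Real.exp (l * F ω)) ∂μ)
          - (∫ ω, Real.exp (l * F ω) ∂μ) * Real.log (∫ ω, Real.exp (l * F ω) ∂μ)
        ≤ l ^ 2 * σ ^ 2 / 2 * ∫ ω, Real.exp (l * F ω) ∂μ) :
    ∀ l : ℝ, 0 < l →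
      (1 / l) * Real.log (∫ ω, Real.exp (l * F ω) ∂μ)
        ≤ (∫ ω, F ω ∂μ) + l * σ ^ 2 / 2 := by
  intro l hl
  rw [one_div_mul_eq_div]
  exact ProbabilityTheory.cgf_div_le_integral_add hF hmgf hEnt hl

/-- Herbst theorem: if Ent[e^{λF}] ≤ (λ²σ²/2) E[e^{λF}] for all λ > 0,
then (1/λ) log E[e^{λF}] ≤ E[F] + λσ²/2 for all λ > 0. -/
theorem herbst {Ω : Type*} [MeasurableSpace Ω]
    (μ : Measure Ω) [IsProbabilityMeasure μ] (F : Ω → ℝ) (σ : ℝ) (hσ : 0 < σ)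
    (hF : Integrable F μ)
    (hmgf : ∀ l : ℝ, 0 < l → Integrable (fun ω => Real.exp (l * F ω)) μ)
    (hmgf2 : ∀ l : ℝ, 0 < l →
      Integrable (fun ω => Real.exp (l * F ω) * Real.log (Real.exp (l * F ω))) μ)
    (hEnt : ∀ l : ℝ, 0 < l →
      (∫ ω, Real.exp (l * F ω) * Real.log (Real.exp (l * F ω)) ∂μ)
          - (∫ ω, Real.exp (l * F ω) ∂μ) * Real.log (∫ ω, Real.exp (l * F ω) ∂μ)
        ≤ l ^ 2 * σ ^ 2 / 2 * ∫ ω, Real.exp (l * F ω) ∂μ) :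
    ∀ l : ℝ, 0 < l →
      (1 / l) * Real.log (∫ ω, Real.exp (l * F ω) ∂μ)
        ≤ (∫ ω, F ω ∂μ) + l * σ ^ 2 / 2 :=
  herbst_general μ F σ hF hmgf hEnt
end

section
/- (Herbst-type integral representation) With M(t) = E_{(x,y)∼D}[e^{−t ℓ(w,x,y)}], for any λ > 0: log E_{S∼D^m}[e^{λ(L_D(w) − L_S(w))}] = λ ∫_0^{λ/m} Ent_D[e^{−α ℓ(w,x,y)}] / (α² E_D[e^{−α ℓ(w,x,y)}]) dα. -/
open MeasureTheory ProbabilityTheory Real Filter Set Topology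

/-!
Write `M(α) = E[e^{-αℓ}]` and `Λ = log M`. By independence the left-hand side equals
`λ E[ℓ] + m Λ(λ/m)`. Since `Ent[e^{-αℓ}] = α M'(α) - M(α) log M(α)`, the integrand is the
derivative of `Λ(α)/α`, and `Λ(α)/α → Λ'(0⁺) = -E[ℓ]` as `α → 0⁺`. The integrand is nonnegative
by Jensen's inequality for `x log x`, hence integrable down to `0`, and the fundamental theorem
of calculus gives `∫₀ᵗ = Λ(t)/t + E[ℓ]` with `t = λ/m`.
-/

theorem intervalIntegral.integral_eq_sub_of_hasDerivAt_of_tendsto_of_nonneg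
    {f f' : ℝ → ℝ} {a b L : ℝ} (hab : a < b)
    (hderiv : ∀ x ∈ Ioc a b, HasDerivAt f (f' x) x) (hf' : ∀ x ∈ Ioo a b, 0 ≤ f' x)
    (ha : Tendsto f (𝓝[>] a) (𝓝 L)) :
    ∫ x in a..b, f' x = f b - L := by
  classical
  have hcont : ContinuousOn (Function.update f a L) (Icc a b) := by
    rw [continuousOn_update_iff, Icc_sdiff_left]
    exact ⟨fun x hx => (hderiv x hx).continuousAt.continuousWithinAt,
      fun _ => ha.mono_left (nhdsWithin_mono _ Ioc_subset_Ioi_self)⟩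
  have hderiv' : ∀ x ∈ Ioo a b, HasDerivAt (Function.update f a L) (f' x) x := fun x hx =>
    (hderiv x (Ioo_subset_Ioc_self hx)).congr_of_eventuallyEq <| by
      filter_upwards [Ioi_mem_nhds hx.1] with y hy using Function.update_of_ne hy.ne' _ _
  have hint : IntervalIntegrable f' volume a b :=
    (intervalIntegrable_iff_integrableOn_Ioc_of_le hab.le).2
      (integrableOn_deriv_of_nonneg hcont hderiv' hf')
  simpa [hab.ne'] using integral_eq_sub_of_hasDerivAt_of_le hab.le hcont hderiv' hint

namespace ProbabilityTheory

variable {Ω ι : Type*} [MeasurableSpace Ω] {μ : Measure Ω} {X : Ω → ℝ}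

noncomputable def ent (μ : Measure Ω) (g : Ω → ℝ) : ℝ :=
  ∫ ω, g ω * log (g ω) ∂μ - (∫ ω, g ω ∂μ) * log (∫ ω, g ω ∂μ)

lemma ent_nonneg [IsProbabilityMeasure μ] {g : Ω → ℝ} (hg : 0 ≤ᵐ[μ] g) (hgi : Integrable g μ)
    (hgl : Integrable (fun ω => g ω * log (g ω)) μ) : 0 ≤ ent μ g :=
  sub_nonneg.2 <| convexOn_mul_log.map_integral_le continuous_mul_log.continuousOn isClosed_Ici
    hg hgi hgl

lemma mgf_sum_pi [Fintype ι] [SigmaFinite μ] (t : ℝ) :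
    mgf (fun S : ι → Ω => ∑ i, X (S i)) (Measure.pi fun _ => μ) t
      = mgf X μ t ^ Fintype.card ι := by
  simp_rw [mgf, Finset.mul_sum, exp_sum]
  exact integral_fintype_prod_eq_pow (fun ω => exp (t * X ω))

lemma Iic_zero_subset_integrableExpSet [IsFiniteMeasure μ] (hX : AEMeasurable X μ)
    (hX0 : 0 ≤ᵐ[μ] X) : Iic 0 ⊆ integrableExpSet X μ := fun t ht =>
  (integrable_const 1).mono' (hX.const_mul t).exp.aestronglyMeasurable <| by
    filter_upwards [hX0] with ω hω
    rw [norm_of_nonneg (exp_pos _).le, exp_le_one_iff]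
    exact mul_nonpos_of_nonpos_of_nonneg ht hω

lemma Iio_zero_subset_interior_integrableExpSet [IsFiniteMeasure μ] (hX : AEMeasurable X μ)
    (hX0 : 0 ≤ᵐ[μ] X) : Iio 0 ⊆ interior (integrableExpSet X μ) := by
  rw [← interior_Iic]
  exact interior_mono (Iic_zero_subset_integrableExpSet hX hX0)

lemma hasDerivAt_mgf_neg [IsFiniteMeasure μ] (hX : AEMeasurable X μ) (hX0 : 0 ≤ᵐ[μ] X)
    {t : ℝ} (ht : 0 < t) :
    HasDerivAt (fun s => mgf X μ (-s)) (-μ[fun ω => X ω * exp (-t * X ω)]) t := by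
  have h := (hasDerivAt_mgf (Iio_zero_subset_interior_integrableExpSet hX hX0
    (neg_neg_of_pos ht))).scomp t (hasDerivAt_neg t)
  simpa [Function.comp_def] using h

lemma continuousOn_integral_mul_exp_neg {g : Ω → ℝ} (hg : Integrable g μ) (hX : AEMeasurable X μ)
    (hX0 : 0 ≤ᵐ[μ] X) : ContinuousOn (fun t => ∫ ω, g ω * exp (-t * X ω) ∂μ) (Ici 0) := by
  refine continuousOn_of_dominated (bound := fun ω => ‖g ω‖)
    (fun t _ => hg.1.mul (hX.const_mul _).exp.aestronglyMeasurable) (fun t ht => ?_) hg.norm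
    (ae_of_all _ fun ω => by fun_prop)
  filter_upwards [hX0] with ω hω
  rw [norm_mul, norm_of_nonneg (exp_pos _).le]
  refine mul_le_of_le_one_right (norm_nonneg _) (exp_le_one_iff.2 ?_)
  exact mul_nonpos_of_nonpos_of_nonneg (neg_nonpos.2 ht) hω

/-- `0` may lie on the boundary of `integrableExpSet X μ`, so the one-sided derivative at `0` is
obtained from the continuity of `t ↦ μ[X e^{-tX}]` up to `0`. -/
lemma hasDerivWithinAt_mgf_neg_zero [IsFiniteMeasure μ] (hXi : Integrable X μ)
    (hX0 : 0 ≤ᵐ[μ] X) : HasDerivWithinAt (fun s => mgf X μ (-s)) (-μ[X]) (Ici 0) 0 := by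
  have hM : ContinuousOn (fun s => mgf X μ (-s)) (Ici 0) := by
    simpa [mgf] using
      continuousOn_integral_mul_exp_neg (integrable_const 1) hXi.aemeasurable hX0
  have hN : Tendsto (fun t => -μ[fun ω => X ω * exp (-t * X ω)]) (𝓝[>] 0) (𝓝 (-μ[X])) := by
    have h := (continuousOn_integral_mul_exp_neg hXi hXi.aemeasurable hX0 0 self_mem_Ici).tendsto
    simpa using (h.mono_left (nhdsWithin_mono _ Ioi_subset_Ici_self)).neg
  refine hasDerivWithinAt_Ici_of_tendsto_deriv (s := Ioi 0)
    (fun t ht =>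
      (hasDerivAt_mgf_neg hXi.aemeasurable hX0 ht).differentiableAt.differentiableWithinAt)
    ((hM 0 self_mem_Ici).mono Ioi_subset_Ici_self) self_mem_nhdsWithin (hN.congr' ?_)
  filter_upwards [self_mem_nhdsWithin] with t ht
  exact (hasDerivAt_mgf_neg hXi.aemeasurable hX0 ht).deriv.symm

lemma tendsto_cgf_neg_div [IsProbabilityMeasure μ] (hXi : Integrable X μ) (hX0 : 0 ≤ᵐ[μ] X) :
    Tendsto (fun t => cgf X μ (-t) / t) (𝓝[>] 0) (𝓝 (-μ[X])) := by
  have h := (hasDerivWithinAt_mgf_neg_zero hXi hX0).log (by simp)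
  rw [neg_zero, mgf_zero, div_one] at h
  refine ((hasDerivWithinAt_iff_tendsto_slope' (lt_irrefl 0)).1
    (h.mono Ioi_subset_Ici_self)).congr fun t => ?_
  simp [slope_def_field, cgf]

lemma ent_exp_neg_mul (t : ℝ) :
    ent μ (fun ω => exp (-t * X ω))
      = -t * μ[fun ω => X ω * exp (-t * X ω)] - mgf X μ (-t) * cgf X μ (-t) := by
  simp only [ent, log_exp, cgf, mgf, ← integral_const_mul]
  congr 2
  ext ω
  ring

lemma ent_exp_neg_mul_nonneg [IsProbabilityMeasure μ] (hX : AEMeasurable X μ) (hX0 : 0 ≤ᵐ[μ] X)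
    {t : ℝ} (ht : 0 < t) : 0 ≤ ent μ (fun ω => exp (-t * X ω)) := by
  refine ent_nonneg (ae_of_all _ fun _ => (exp_pos _).le)
    (Iic_zero_subset_integrableExpSet hX hX0 (neg_nonpos.2 ht.le)) ?_
  have h := (integrable_pow_mul_exp_of_mem_interior_integrableExpSet
    (Iio_zero_subset_interior_integrableExpSet hX hX0 (neg_neg_of_pos ht)) 1).const_mul (-t)
  refine h.congr (ae_of_all _ fun ω => ?_)
  simp only [log_exp, pow_one]
  ring

lemma hasDerivAt_cgf_neg_div [IsProbabilityMeasure μ] (hX : AEMeasurable X μ) (hX0 : 0 ≤ᵐ[μ] X)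
    {t : ℝ} (ht : 0 < t) :
    HasDerivAt (fun s => cgf X μ (-s) / s)
      (ent μ (fun ω => exp (-t * X ω)) / (t ^ 2 * mgf X μ (-t))) t := by
  have hM : 0 < mgf X μ (-t) :=
    mgf_pos (Iic_zero_subset_integrableExpSet hX hX0 (neg_nonpos.2 ht.le))
  refine (((hasDerivAt_mgf_neg hX hX0 ht).log hM.ne').div (hasDerivAt_id t) ht.ne').congr_deriv ?_
  rw [ent_exp_neg_mul, cgf, id]
  generalize μ[fun ω => X ω * exp (-t * X ω)] = N
  field_simp

theorem integral_ent_div_eq_cgf_div_add [IsProbabilityMeasure μ] (hXi : Integrable X μ)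
    (hX0 : 0 ≤ᵐ[μ] X) {t : ℝ} (ht : 0 < t) :
    ∫ s in 0..t, ent μ (fun ω => exp (-s * X ω)) / (s ^ 2 * mgf X μ (-s))
      = cgf X μ (-t) / t + μ[X] := by
  have hX := hXi.aemeasurable
  rw [intervalIntegral.integral_eq_sub_of_hasDerivAt_of_tendsto_of_nonneg ht
    (fun s hs => hasDerivAt_cgf_neg_div hX hX0 hs.1) (fun s hs => ?_)
    (tendsto_cgf_neg_div hXi hX0), sub_neg_eq_add]
  have hM := mgf_pos (Iic_zero_subset_integrableExpSet hX hX0 (neg_nonpos.2 hs.1.le))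
  exact div_nonneg (ent_exp_neg_mul_nonneg hX hX0 hs.1) (by positivity)

end ProbabilityTheory

theorem herbst_integral_representation_general {Ω : Type*} [MeasurableSpace Ω]
    (D : Measure Ω) [IsProbabilityMeasure D]
    (m : ℕ) (hm : 0 < m) (ℓ : Ω → ℝ) (hnn : ∀ ω, 0 ≤ ℓ ω)
    (hint : Integrable ℓ D) (lam : ℝ) (hlam : 0 < lam) :
    Real.log (∫ S : Fin m → Ω,
        Real.exp (lam * ((∫ ω, ℓ ω ∂D) - (1 / m : ℝ) * ∑ i, ℓ (S i)))
        ∂(Measure.pi fun _ => D))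
      = lam * ∫ α in (0 : ℝ)..(lam / m),
          ((∫ ω, Real.exp (-α * ℓ ω) * Real.log (Real.exp (-α * ℓ ω)) ∂D)
              - (∫ ω, Real.exp (-α * ℓ ω) ∂D) * Real.log (∫ ω, Real.exp (-α * ℓ ω) ∂D))
            / (α ^ 2 * ∫ ω, Real.exp (-α * ℓ ω) ∂D) := by
  have hm' : (0 : ℝ) < m := Nat.cast_pos.2 hm
  have hsplit : ∀ S : Fin m → Ω, exp (lam * ((∫ ω, ℓ ω ∂D) - (1 / m : ℝ) * ∑ i, ℓ (S i)))
      = exp (lam * ∫ ω, ℓ ω ∂D) * exp (-(lam / m) * ∑ i, ℓ (S i)) := fun S => by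
    rw [← exp_add]; ring_nf
  have hM : 0 < mgf ℓ D (-(lam / m)) := mgf_pos (Iic_zero_subset_integrableExpSet
    hint.aemeasurable (ae_of_all _ hnn) (neg_nonpos.2 (div_pos hlam hm').le))
  change _ = lam * ∫ α in (0 : ℝ)..(lam / m),
    ent D (fun ω => exp (-α * ℓ ω)) / (α ^ 2 * mgf ℓ D (-α))
  rw [integral_ent_div_eq_cgf_div_add hint (ae_of_all _ hnn) (div_pos hlam hm'),
    integral_congr_ae (ae_of_all _ hsplit), integral_const_mul]
  change log (exp _ * mgf (fun S : Fin m → Ω => ∑ i, ℓ (S i)) _ _) = _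
  rw [mgf_sum_pi, Fintype.card_fin, log_mul (exp_ne_zero _) (pow_ne_zero _ hM.ne'), log_exp,
    log_pow, cgf]
  field_simp
  ring

/-- Herbst-type integral representation:
log E_{S∼D^m}[e^{λ(L_D − L_S)}] = λ ∫_0^{λ/m} Ent_D[e^{−αℓ}] / (α² E_D[e^{−αℓ}]) dα. -/
theorem herbst_integral_representation {Ω : Type*} [MeasurableSpace Ω]
    (D : Measure Ω) [IsProbabilityMeasure D]
    (m : ℕ) (hm : 0 < m) (ℓ : Ω → ℝ) (hmeas : Measurable ℓ) (hnn : ∀ ω, 0 ≤ ℓ ω)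
    (hint : Integrable ℓ D) (lam : ℝ) (hlam : 0 < lam) :
    Real.log (∫ S : Fin m → Ω,
        Real.exp (lam * ((∫ ω, ℓ ω ∂D) - (1 / m : ℝ) * ∑ i, ℓ (S i)))
        ∂(Measure.pi fun _ => D))
      = lam * ∫ α in (0 : ℝ)..(lam / m),
          ((∫ ω, Real.exp (-α * ℓ ω) * Real.log (Real.exp (-α * ℓ ω)) ∂D)
              - (∫ ω, Real.exp (-α * ℓ ω) ∂D) * Real.log (∫ ω, Real.exp (-α * ℓ ω) ∂D))
            / (α ^ 2 * ∫ ω, Real.exp (-α * ℓ ω) ∂D) :=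
  herbst_integral_representation_general D m hm ℓ hnn hint lam hlam
end

section
/- (Log-Sobolev inequality for Rademacher variables) Let Z be uniform on {−1,+1} and f : {−1,+1} → ℝ. Define ∇f(z) = (f(z) − f(−z))/2. Then Ent[e^{f(Z)}] ≤ (1/2) E[(∇f(Z))² e^{f(Z)}]. -/
/-!
Write `f 1 = m + t` and `f (-1) = m - t`. Both sides of the inequality are `exp m` times a function
of `t` alone, and it reduces to `t sinh t - cosh t log cosh t ≤ t² cosh t / 2`. The difference
`lsiDeficit t` of the two sides is even, vanishes at `0`, and its derivative
`sinh t (t² / 2 + log cosh t)` is nonnegative for `t ≥ 0`.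
-/

open Real

noncomputable def lsiDeficit (t : ℝ) : ℝ :=
  t ^ 2 * cosh t / 2 - t * sinh t + cosh t * log (cosh t)

lemma lsiDeficit_neg (t : ℝ) : lsiDeficit (-t) = lsiDeficit t := by
  simp only [lsiDeficit, cosh_neg, sinh_neg]
  ring

lemma hasDerivAt_lsiDeficit (t : ℝ) :
    HasDerivAt lsiDeficit (sinh t * (t ^ 2 / 2 + log (cosh t))) t := by
  have hlog : HasDerivAt (fun x => log (cosh x)) (sinh t / cosh t) t :=
    (hasDerivAt_cosh t).log (cosh_pos t).ne'
  have h := ((((hasDerivAt_pow 2 t).mul (hasDerivAt_cosh t)).div_const 2).sub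
    ((hasDerivAt_id' t).mul (hasDerivAt_sinh t))).add ((hasDerivAt_cosh t).mul hlog)
  refine h.congr_deriv ?_
  field_simp
  ring

lemma lsiDeficit_nonneg_of_nonneg {t : ℝ} (ht : 0 ≤ t) : 0 ≤ lsiDeficit t := by
  have hmono : MonotoneOn lsiDeficit (Set.Ici 0) := by
    refine monotoneOn_of_deriv_nonneg (convex_Ici 0)
      (fun x _ => (hasDerivAt_lsiDeficit x).continuousAt.continuousWithinAt)
      (fun x _ => (hasDerivAt_lsiDeficit x).differentiableAt.differentiableWithinAt) ?_
    intro x hx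
    rw [interior_Ici, Set.mem_Ioi] at hx
    rw [(hasDerivAt_lsiDeficit x).deriv]
    have hsinh : 0 ≤ sinh x := sinh_nonneg_iff.mpr hx.le
    have hlog : 0 ≤ log (cosh x) := log_nonneg (one_le_cosh x)
    positivity
  simpa [lsiDeficit] using hmono Set.self_mem_Ici ht ht

lemma lsiDeficit_nonneg (t : ℝ) : 0 ≤ lsiDeficit t := by
  rcases le_total 0 t with ht | ht
  · exact lsiDeficit_nonneg_of_nonneg ht
  · simpa [lsiDeficit_neg] using lsiDeficit_nonneg_of_nonneg (neg_nonneg.mpr ht)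

lemma exp_add_add_exp_sub_div_two (m t : ℝ) :
    (exp (m + t) + exp (m - t)) / 2 = exp m * cosh t := by
  rw [cosh_eq, exp_add, exp_sub, exp_neg]
  ring

lemma two_point_lsi_deficit_eq (m t : ℝ) :
    t ^ 2 * (exp (m + t) + exp (m - t)) / 4
      - ((exp (m + t) * (m + t) + exp (m - t) * (m - t)) / 2
        - (exp (m + t) + exp (m - t)) / 2 * log ((exp (m + t) + exp (m - t)) / 2))
      = exp m * lsiDeficit t := by
  rw [exp_add_add_exp_sub_div_two, log_mul (exp_pos m).ne' (cosh_pos t).ne', log_exp,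
    lsiDeficit, cosh_eq, sinh_eq, exp_add, exp_sub, exp_neg]
  field_simp
  ring

theorem two_point_lsi (a b : ℝ) :
    (exp a * a + exp b * b) / 2 - (exp a + exp b) / 2 * log ((exp a + exp b) / 2)
      ≤ ((a - b) / 2) ^ 2 * (exp a + exp b) / 4 := by
  obtain ⟨m, t, rfl, rfl⟩ : ∃ m t, a = m + t ∧ b = m - t :=
    ⟨(a + b) / 2, (a - b) / 2, by ring, by ring⟩
  have hdef := two_point_lsi_deficit_eq m t
  have hpos := mul_nonneg (exp_pos m).le (lsiDeficit_nonneg t)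
  have ht : (m + t - (m - t)) / 2 = t := by ring
  rw [ht]
  linarith

/-- Log-Sobolev inequality for Rademacher variables:
Z uniform on {−1,+1}, ∇f(z) = (f(z) − f(−z))/2, then
Ent[e^{f(Z)}] ≤ (1/2) E[(∇f(Z))² e^{f(Z)}]. Expectations over the uniform
two-point distribution are written out explicitly. -/
theorem rademacher_lsi (f : ℝ → ℝ) :
    (Real.exp (f 1) * Real.log (Real.exp (f 1))
        + Real.exp (f (-1)) * Real.log (Real.exp (f (-1)))) / 2
      - ((Real.exp (f 1) + Real.exp (f (-1))) / 2)
        * Real.log ((Real.exp (f 1) + Real.exp (f (-1))) / 2)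
    ≤ (1 / 2) * ((((f 1 - f (-1)) / 2) ^ 2 * Real.exp (f 1)
        + ((f (-1) - f 1) / 2) ^ 2 * Real.exp (f (-1))) / 2) := by
  rw [log_exp, log_exp]
  convert two_point_lsi (f 1) (f (-1)) using 1
  ring
end

section
/- (Tensorization of entropy / subadditivity) Let Z_1,…,Z_d be independent random variables and f ≥ 0 a function of (Z_1,…,Z_d) with finite entropy. Then Ent[f(Z_1,…,Z_d)] ≤ E[∑_{i=1}^d Ent_i[f]], where Ent_i denotes the entropy taken over Z_i alone with the other coordinates fixed. -/
/-!
Write `F_s` for `f` integrated over the coordinates in `s`, so that `F_∅ = f` and `F_univ = E f`.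
Adding the coordinates one at a time telescopes `f (log f - log E f)` into a sum of terms
`f (log F_s - log F_{s ∪ {i}})`, and by `log x ≤ x - 1` each of them is at most
`f log f - f log G_i - f + G_i F_s / F_{s ∪ {i}}` with `G_i = F_{i}`. Integrating over the `i`-th
coordinate turns `F_s` into `F_{s ∪ {i}}`, so the last summand has integral at most `E f`; and since
`G_i` does not depend on the `i`-th coordinate, `E[f log G_i] = E[G_i log G_i]`. Hence the bound
integrates to at most `E[Ent_i f]`. Summing the pointwise bounds before integrating avoids any
integrability assumption on `f log F_s`.
-/

open MeasureTheory Real Function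
open scoped ENNReal

theorem Real.mul_log_sub_log_le {f a c g : ℝ} (hf : 0 < f) (ha : 0 < a) (hc : 0 < c)
    (hg : 0 < g) : f * (log a - log c) ≤ f * log f - f * log g - f + g * a / c := by
  have h := log_le_sub_one_of_pos (x := g * a / (c * f)) (by positivity)
  rw [log_div (by positivity) (by positivity), log_mul hg.ne' ha.ne', log_mul hc.ne' hf.ne'] at h
  have h2 := mul_le_mul_of_nonneg_left h hf.le
  have h3 : f * (g * a / (c * f) - 1) = g * a / c - f := by field_simp
  linarith

theorem DependsOn.comp_left {ι β γ : Type*} {X : ι → Type*} {f : (∀ i, X i) → β} {s : Set ι}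
    (hf : DependsOn f s) (g : β → γ) : DependsOn (fun x => g (f x)) s :=
  fun _ _ h => congrArg g (hf h)

theorem DependsOn.apply_updateFinset {ι β : Type*} [DecidableEq ι] {X : ι → Type*}
    {c : (∀ j, X j) → β} {s : Finset ι} (hc : DependsOn c (↑s)ᶜ) (z : ∀ j, X j)
    (y : ∀ j : s, X j) : c (Function.updateFinset z s y) = c z :=
  hc fun j hj => by simp [Function.updateFinset, show j ∉ s from hj]

namespace MeasureTheory

noncomputable def entropy {α : Type*} [MeasurableSpace α] (ν : Measure α) (g : α → ℝ) : ℝ :=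
  ∫ x, g x * log (g x) ∂ν - (∫ x, g x ∂ν) * log (∫ x, g x ∂ν)

theorem entropy_nonneg {α : Type*} [MeasurableSpace α] {ν : Measure α} [IsProbabilityMeasure ν]
    {g : α → ℝ} (hnn : ∀ᵐ x ∂ν, 0 ≤ g x) (hg : Integrable g ν)
    (hgl : Integrable (fun x => g x * log (g x)) ν) : 0 ≤ entropy ν g := by
  have := convexOn_mul_log.map_integral_le continuous_mul_log.continuousOn isClosed_Ici hnn hg hgl
  unfold entropy
  linarith

section Update
variable {ι : Type*} [Fintype ι] [DecidableEq ι] {X : ι → Type*} [∀ i, MeasurableSpace (X i)]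
  {μ : ∀ i, Measure (X i)} [∀ i, IsProbabilityMeasure (μ i)]

variable (μ) in
theorem measurePreserving_update (i : ι) :
    MeasurePreserving (fun p : (∀ j, X j) × X i => update p.1 i p.2)
      ((Measure.pi μ).prod (μ i)) (Measure.pi μ) := by
  refine ⟨measurable_update', (Measure.pi_eq fun s hs => ?_).symm⟩
  have hpre : (fun p : (∀ j, X j) × X i => update p.1 i p.2) ⁻¹' Set.univ.pi s
      = Set.univ.pi (update s i Set.univ) ×ˢ s i := by
    ext ⟨z, x⟩
    simp only [Set.mem_preimage, Set.mem_pi, Set.mem_univ, true_implies, Set.mem_prod]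
    constructor
    · intro h
      refine ⟨fun j => ?_, by simpa using h i⟩
      rcases eq_or_ne j i with rfl | hj
      · simp
      · simpa [hj] using h j
    · rintro ⟨h, hx⟩ j
      rcases eq_or_ne j i with rfl | hj
      · simpa using hx
      · simpa [hj] using h j
  rw [Measure.map_apply measurable_update' (MeasurableSet.univ_pi hs), hpre,
    Measure.prod_prod, Measure.pi_pi, ← Finset.mul_prod_erase _ _ (Finset.mem_univ i),
    ← Finset.mul_prod_erase Finset.univ (fun j => μ j (s j)) (Finset.mem_univ i),
    update_self, measure_univ, one_mul, mul_comm]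
  congr 1
  exact Finset.prod_congr rfl fun j hj => by rw [update_of_ne (Finset.ne_of_mem_erase hj)]

theorem Integrable.comp_update {H : (∀ j, X j) → ℝ} (hH : Integrable H (Measure.pi μ)) (i : ι) :
    Integrable (fun p : (∀ j, X j) × X i => H (update p.1 i p.2)) ((Measure.pi μ).prod (μ i)) :=
  (measurePreserving_update μ i).integrable_comp hH.aestronglyMeasurable |>.mpr hH

theorem Integrable.integral_update {H : (∀ j, X j) → ℝ} (hH : Integrable H (Measure.pi μ))
    (i : ι) : Integrable (fun z => ∫ x, H (update z i x) ∂μ i) (Measure.pi μ) :=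
  (hH.comp_update i).integral_prod_left

theorem Integrable.ae_integrable_update {H : (∀ j, X j) → ℝ} (hH : Integrable H (Measure.pi μ))
    (i : ι) : ∀ᵐ z ∂Measure.pi μ, Integrable (fun x => H (update z i x)) (μ i) :=
  (hH.comp_update i).prod_right_ae

theorem integral_integral_update {H : (∀ j, X j) → ℝ} (hH : Integrable H (Measure.pi μ)) (i : ι) :
    ∫ z, ∫ x, H (update z i x) ∂μ i ∂Measure.pi μ = ∫ z, H z ∂Measure.pi μ := by
  have hmap := (measurePreserving_update μ i).map_eq
  rw [← integral_prod _ (hH.comp_update i), ← integral_map measurable_update'.aemeasurable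
    (by rw [hmap]; exact hH.aestronglyMeasurable), hmap]

end Update

section LMarginal
variable {ι : Type*} [DecidableEq ι] {X : ι → Type*} [∀ i, MeasurableSpace (X i)]
  {μ : ∀ i, Measure (X i)}

variable (μ) in
theorem dependsOn_lmarginal (s : Finset ι) (f : (∀ j, X j) → ℝ≥0∞) :
    DependsOn (∫⋯∫⁻_s, f ∂μ) (↑s)ᶜ :=
  fun _ _ h => lmarginal_congr μ f h

theorem lmarginal_mul_of_dependsOn {s : Finset ι} {f c : (∀ j, X j) → ℝ≥0∞} (hf : Measurable f)
    (hc : DependsOn c (↑s)ᶜ) :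
    ∫⋯∫⁻_s, (fun z => f z * c z) ∂μ = fun z => (∫⋯∫⁻_s, f ∂μ) z * c z := by
  ext z
  simp only [lmarginal, hc.apply_updateFinset]
  exact lintegral_mul_const _ (hf.comp measurable_updateFinset)

theorem lmarginal_of_dependsOn [∀ i, IsProbabilityMeasure (μ i)] {s : Finset ι}
    {c : (∀ j, X j) → ℝ≥0∞} (hc : DependsOn c (↑s)ᶜ) : ∫⋯∫⁻_s, c ∂μ = c := by
  ext z
  simp [lmarginal, hc.apply_updateFinset]

variable [Fintype ι] [∀ i, IsProbabilityMeasure (μ i)]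

theorem lintegral_mul_lmarginal {s : Finset ι} {f c : (∀ j, X j) → ℝ≥0∞} (hf : Measurable f)
    (hcm : Measurable c) (hc : DependsOn c (↑s)ᶜ) :
    ∫⁻ z, f z * c z ∂Measure.pi μ = ∫⁻ z, (∫⋯∫⁻_s, f ∂μ) z * c z ∂Measure.pi μ := by
  refine lintegral_eq_of_lmarginal_eq s (hf.mul hcm) ((hf.lmarginal μ).mul hcm) ?_
  rw [lmarginal_mul_of_dependsOn hf hc, lmarginal_mul_of_dependsOn (hf.lmarginal μ) hc,
    lmarginal_of_dependsOn (dependsOn_lmarginal μ s f)]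

theorem lintegral_lmarginal {s : Finset ι} {f : (∀ j, X j) → ℝ≥0∞} (hf : Measurable f) :
    ∫⁻ z, (∫⋯∫⁻_s, f ∂μ) z ∂Measure.pi μ = ∫⁻ z, f z ∂Measure.pi μ := by
  simpa using (lintegral_mul_lmarginal (s := s) hf measurable_const
    ((dependsOn_const (1 : ℝ≥0∞)).mono (Set.empty_subset _))).symm

theorem ae_lmarginal_lt_top {s : Finset ι} {f : (∀ j, X j) → ℝ≥0∞} (hf : Measurable f)
    (hfi : ∫⁻ z, f z ∂Measure.pi μ ≠ ∞) : ∀ᵐ z ∂Measure.pi μ, (∫⋯∫⁻_s, f ∂μ) z < ∞ :=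
  ae_lt_top (hf.lmarginal μ) (by rwa [lintegral_lmarginal hf])

theorem ae_lmarginal_ne_zero {s : Finset ι} {f : (∀ j, X j) → ℝ≥0∞} (hf : Measurable f) :
    ∀ᵐ z ∂Measure.pi μ, f z ≠ 0 → (∫⋯∫⁻_s, f ∂μ) z ≠ 0 := by
  set N := {z | (∫⋯∫⁻_s, f ∂μ) z = 0}
  have hN : MeasurableSet N := hf.lmarginal μ (measurableSet_singleton 0)
  -- `N` does not depend on the coordinates in `s`, so `f` integrates over `N` like its marginal.
  have hzero : ∫⁻ z, f z * N.indicator 1 z ∂Measure.pi μ = 0 := by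
    rw [lintegral_mul_lmarginal hf (measurable_one.indicator hN)
      ((dependsOn_lmarginal μ s f).comp_left fun a => Set.indicator {0} 1 a)]
    refine lintegral_eq_zero_of_ae_eq_zero (ae_of_all _ fun z => ?_)
    by_cases hz : z ∈ N
    · simp [show (∫⋯∫⁻_s, f ∂μ) z = 0 from hz]
    · simp [hz]
  filter_upwards [(lintegral_eq_zero_iff (hf.mul (measurable_one.indicator hN))).mp hzero]
    with z hz hfz hmz
  simp [N, hmz, hfz] at hz

theorem lintegral_lmarginal_mul_div_le {f : (∀ j, X j) → ℝ≥0∞} (hf : Measurable f)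
    {s : Finset ι} {i : ι} (hi : i ∉ s) :
    ∫⁻ z, (∫⋯∫⁻_{i}, f ∂μ) z * (∫⋯∫⁻_s, f ∂μ) z / (∫⋯∫⁻_(insert i s), f ∂μ) z ∂Measure.pi μ
      ≤ ∫⁻ z, f z ∂Measure.pi μ := by
  set G := ∫⋯∫⁻_{i}, f ∂μ
  set F := ∫⋯∫⁻_s, f ∂μ
  set F' := ∫⋯∫⁻_(insert i s), f ∂μ
  have hdep : DependsOn (fun z => G z / F' z) (↑({i} : Finset ι))ᶜ := fun x y h =>
    congrArg₂ (· / ·) (dependsOn_lmarginal μ {i} f h)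
      ((dependsOn_lmarginal μ (insert i s) f).mono (by simp) h)
  have hF' : ∫⋯∫⁻_{i}, F ∂μ = F' := by
    rw [← lmarginal_union μ f hf (Finset.disjoint_singleton_left.mpr hi), ← Finset.insert_eq]
  calc ∫⁻ z, G z * F z / F' z ∂Measure.pi μ = ∫⁻ z, F z * (G z / F' z) ∂Measure.pi μ := by
        simp only [mul_comm (G _), mul_div_assoc]
    _ = ∫⁻ z, F' z * (G z / F' z) ∂Measure.pi μ := by
        rw [lintegral_mul_lmarginal (c := fun z => G z / F' z) (hf.lmarginal μ)
          ((hf.lmarginal μ).div (hf.lmarginal μ)) hdep, hF']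
    _ ≤ ∫⁻ z, G z ∂Measure.pi μ := lintegral_mono fun z => ENNReal.mul_div_le
    _ = ∫⁻ z, f z ∂Measure.pi μ := lintegral_lmarginal hf

end LMarginal

section Marginal
variable {ι : Type*} [DecidableEq ι] {X : ι → Type*} [∀ i, MeasurableSpace (X i)]
  {μ : ∀ i, Measure (X i)} {f : (∀ j, X j) → ℝ}

/-- For `f ≥ 0`: `f` integrated over the coordinates in `s`, i.e. the conditional expectation of `f`
given the other coordinates; `0` where that integral is infinite. -/
noncomputable def marginal (μ : ∀ i, Measure (X i)) (s : Finset ι) (f : (∀ j, X j) → ℝ)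
    (z : ∀ j, X j) : ℝ :=
  ((∫⋯∫⁻_s, (fun w => ENNReal.ofReal (f w)) ∂μ) z).toReal

theorem marginal_nonneg (s : Finset ι) (z : ∀ j, X j) : 0 ≤ marginal μ s f z :=
  ENNReal.toReal_nonneg

variable (μ) in
theorem dependsOn_marginal (s : Finset ι) (f : (∀ j, X j) → ℝ) :
    DependsOn (marginal μ s f) (↑s)ᶜ :=
  (dependsOn_lmarginal μ s _).comp_left ENNReal.toReal

theorem marginal_empty (hnn : ∀ z, 0 ≤ f z) : marginal μ ∅ f = f := by
  ext z
  simp [marginal, hnn z]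

theorem marginal_singleton (hf : Measurable f) (hnn : ∀ z, 0 ≤ f z) (i : ι) (z : ∀ j, X j) :
    marginal μ {i} f z = ∫ x, f (update z i x) ∂μ i := by
  rw [marginal, lmarginal_singleton, integral_eq_lintegral_of_nonneg_ae
    (ae_of_all _ fun x => hnn _) (hf.comp (measurable_update z)).aestronglyMeasurable]

theorem measurable_marginal [∀ i, SigmaFinite (μ i)] (hf : Measurable f) (s : Finset ι) :
    Measurable (marginal μ s f) :=
  (hf.ennreal_ofReal.lmarginal μ).ennreal_toReal

variable [Fintype ι] [∀ i, IsProbabilityMeasure (μ i)]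

theorem marginal_univ (hf : Measurable f) (hnn : ∀ z, 0 ≤ f z) (z : ∀ j, X j) :
    marginal μ Finset.univ f z = ∫ w, f w ∂Measure.pi μ := by
  rw [marginal, lmarginal_univ, integral_eq_lintegral_of_nonneg_ae (ae_of_all _ hnn)
    hf.aestronglyMeasurable]

theorem ae_marginal_pos (hf : Measurable f) (hfi : Integrable f (Measure.pi μ)) (s : Finset ι) :
    ∀ᵐ z ∂Measure.pi μ, 0 < f z → 0 < marginal μ s f z := by
  filter_upwards [ae_lmarginal_ne_zero (μ := μ) (s := s) hf.ennreal_ofReal,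
    ae_lmarginal_lt_top (s := s) hf.ennreal_ofReal hfi.lintegral_lt_top.ne] with z h0 htop hpos
  exact ENNReal.toReal_pos (h0 (by simpa using hpos)) htop.ne

theorem lintegral_ofReal_mul_of_dependsOn {s : Finset ι} {c : (∀ j, X j) → ℝ≥0∞}
    (hf : Measurable f) (hfi : Integrable f (Measure.pi μ)) (hcm : Measurable c)
    (hc : DependsOn c (↑s)ᶜ) :
    ∫⁻ z, ENNReal.ofReal (f z) * c z ∂Measure.pi μ
      = ∫⁻ z, ENNReal.ofReal (marginal μ s f z) * c z ∂Measure.pi μ := by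
  rw [lintegral_mul_lmarginal hf.ennreal_ofReal hcm hc]
  refine lintegral_congr_ae ?_
  filter_upwards [ae_lmarginal_lt_top (s := s) hf.ennreal_ofReal hfi.lintegral_lt_top.ne] with z hz
  rw [marginal, ENNReal.ofReal_toReal hz.ne]

theorem integral_mul_of_dependsOn {s : Finset ι} {c : (∀ j, X j) → ℝ} (hf : Measurable f)
    (hnn : ∀ z, 0 ≤ f z) (hfi : Integrable f (Measure.pi μ)) (hcm : Measurable c)
    (hc : DependsOn c (↑s)ᶜ) (hgc : Integrable (fun z => marginal μ s f z * c z) (Measure.pi μ)) :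
    Integrable (fun z => f z * c z) (Measure.pi μ) ∧
      ∫ z, f z * c z ∂Measure.pi μ = ∫ z, marginal μ s f z * c z ∂Measure.pi μ := by
  have key (ψ : ℝ → ℝ≥0∞) (hψ : Measurable ψ) :
      ∫⁻ z, ENNReal.ofReal (f z) * ψ (c z) ∂Measure.pi μ
        = ∫⁻ z, ENNReal.ofReal (marginal μ s f z) * ψ (c z) ∂Measure.pi μ :=
    lintegral_ofReal_mul_of_dependsOn hf hfi (hψ.comp hcm) (hc.comp_left ψ)
  have hfc : Integrable (fun z => f z * c z) (Measure.pi μ) := by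
    refine ⟨(hf.mul hcm).aestronglyMeasurable, ?_⟩
    have := hgc.2
    simp only [HasFiniteIntegral, enorm_mul, Real.enorm_of_nonneg (hnn _),
      Real.enorm_of_nonneg (marginal_nonneg _ _)] at this ⊢
    rwa [key _ measurable_enorm]
  refine ⟨hfc, ?_⟩
  rw [integral_eq_lintegral_pos_part_sub_lintegral_neg_part hfc,
    integral_eq_lintegral_pos_part_sub_lintegral_neg_part hgc]
  simp only [← mul_neg, ENNReal.ofReal_mul (hnn _), ENNReal.ofReal_mul (marginal_nonneg _ _)]
  rw [key _ ENNReal.measurable_ofReal, key (fun t => ENNReal.ofReal (-t)) (by fun_prop)]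

theorem integral_marginal_mul_div_le (hf : Measurable f) (hnn : ∀ z, 0 ≤ f z)
    (hfi : Integrable f (Measure.pi μ)) {s : Finset ι} {i : ι} (hi : i ∉ s) :
    Integrable (fun z => marginal μ {i} f z * marginal μ s f z / marginal μ (insert i s) f z)
        (Measure.pi μ) ∧
      ∫ z, marginal μ {i} f z * marginal μ s f z / marginal μ (insert i s) f z ∂Measure.pi μ
        ≤ ∫ z, f z ∂Measure.pi μ := by
  have hφ := hf.ennreal_ofReal
  set W := fun z => (∫⋯∫⁻_{i}, (fun w => ENNReal.ofReal (f w)) ∂μ) z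
    * (∫⋯∫⁻_s, (fun w => ENNReal.ofReal (f w)) ∂μ) z
    / (∫⋯∫⁻_(insert i s), (fun w => ENNReal.ofReal (f w)) ∂μ) z
  have hWm : Measurable W :=
    ((hφ.lmarginal μ).mul (hφ.lmarginal μ)).div (hφ.lmarginal μ)
  have hW : ∫⁻ z, W z ∂Measure.pi μ ≤ ENNReal.ofReal (∫ z, f z ∂Measure.pi μ) :=
    (lintegral_lmarginal_mul_div_le hφ hi).trans_eq
      (ofReal_integral_eq_lintegral_ofReal hfi (ae_of_all _ hnn)).symm
  have hWfin : ∫⁻ z, W z ∂Measure.pi μ ≠ ∞ := ne_top_of_le_ne_top ENNReal.ofReal_ne_top hW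
  have hreal : (fun z => marginal μ {i} f z * marginal μ s f z / marginal μ (insert i s) f z)
      = fun z => (W z).toReal := by
    ext z
    simp only [W, marginal, ENNReal.toReal_div, ENNReal.toReal_mul]
  rw [hreal, integral_toReal hWm.aemeasurable (ae_lt_top hWm hWfin)]
  exact ⟨integrable_toReal_of_lintegral_ne_top hWm.aemeasurable hWfin,
    ENNReal.toReal_le_of_le_ofReal (integral_nonneg hnn) hW⟩

end Marginal

section Tensorization
variable {ι : Type*} [Fintype ι] [DecidableEq ι] {X : ι → Type*} [∀ i, MeasurableSpace (X i)]
  {μ : ∀ i, Measure (X i)} [∀ i, IsProbabilityMeasure (μ i)] {f : (∀ j, X j) → ℝ}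

theorem ae_entropy_update_nonneg (hnn : ∀ z, 0 ≤ f z) (hfi : Integrable f (Measure.pi μ))
    (hfl : Integrable (fun z => f z * log (f z)) (Measure.pi μ)) (i : ι) :
    ∀ᵐ z ∂Measure.pi μ, 0 ≤ entropy (μ i) (fun x => f (update z i x)) := by
  filter_upwards [hfi.ae_integrable_update i, hfl.ae_integrable_update i] with z h1 h2
  exact entropy_nonneg (ae_of_all _ fun x => hnn _) h1 h2

theorem integrable_entropy_update (hf : Measurable f) (hnn : ∀ z, 0 ≤ f z)
    (hfi : Integrable f (Measure.pi μ)) (hfl : Integrable (fun z => f z * log (f z)) (Measure.pi μ))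
    (hsum : Integrable (fun z => ∑ i, entropy (μ i) (fun x => f (update z i x))) (Measure.pi μ))
    (i : ι) : Integrable (fun z => entropy (μ i) (fun x => f (update z i x))) (Measure.pi μ) := by
  have hg := measurable_marginal (μ := μ) hf {i}
  have hmeas : AEStronglyMeasurable (fun z => entropy (μ i) (fun x => f (update z i x)))
      (Measure.pi μ) := by
    simp only [entropy, ← marginal_singleton hf hnn]
    exact (hfl.integral_update i).aestronglyMeasurable.sub
      (hg.mul (measurable_log.comp hg)).aestronglyMeasurable
  refine hsum.mono hmeas ?_
  filter_upwards [ae_all_iff.mpr fun j => ae_entropy_update_nonneg hnn hfi hfl j] with z hz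
  rw [norm_of_nonneg (hz i), norm_of_nonneg (Finset.sum_nonneg fun j _ => hz j)]
  exact Finset.single_le_sum (fun j _ => hz j) (Finset.mem_univ i)

theorem integral_mul_log_marginal (hf : Measurable f) (hnn : ∀ z, 0 ≤ f z)
    (hfi : Integrable f (Measure.pi μ)) (hfl : Integrable (fun z => f z * log (f z)) (Measure.pi μ))
    {i : ι}
    (hEnt : Integrable (fun z => entropy (μ i) (fun x => f (update z i x))) (Measure.pi μ)) :
    Integrable (fun z => f z * log (marginal μ {i} f z)) (Measure.pi μ) ∧
      ∫ z, f z * log (marginal μ {i} f z) ∂Measure.pi μ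
        = ∫ z, f z * log (f z) ∂Measure.pi μ
          - ∫ z, entropy (μ i) (fun x => f (update z i x)) ∂Measure.pi μ := by
  set g := marginal μ {i} f
  have hrepr (z : ∀ j, X j) : g z * log (g z) = ∫ x, f (update z i x) * log (f (update z i x)) ∂μ i
      - entropy (μ i) (fun x => f (update z i x)) := by
    simp only [entropy, g, marginal_singleton hf hnn]
    ring
  have hglog : Integrable (fun z => g z * log (g z)) (Measure.pi μ) := by
    simp_rw [hrepr]
    exact (hfl.integral_update i).sub hEnt
  obtain ⟨hint, heq⟩ := integral_mul_of_dependsOn (c := fun z => log (g z)) hf hnn hfi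
    (measurable_log.comp (measurable_marginal hf _))
    ((dependsOn_marginal μ {i} f).comp_left log) hglog
  refine ⟨hint, ?_⟩
  rw [heq, integral_congr_ae (ae_of_all _ hrepr), integral_sub (hfl.integral_update i) hEnt,
    integral_integral_update hfl]

theorem exists_mul_log_marginal_sub_insert_le (hf : Measurable f) (hnn : ∀ z, 0 ≤ f z)
    (hfi : Integrable f (Measure.pi μ)) (hfl : Integrable (fun z => f z * log (f z)) (Measure.pi μ))
    {s : Finset ι} {i : ι} (hi : i ∉ s)
    (hEnt : Integrable (fun z => entropy (μ i) (fun x => f (update z i x))) (Measure.pi μ)) :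
    ∃ R, Integrable R (Measure.pi μ) ∧
      (∀ᵐ z ∂Measure.pi μ,
        f z * (log (marginal μ s f z) - log (marginal μ (insert i s) f z)) ≤ R z) ∧
      ∫ z, R z ∂Measure.pi μ ≤ ∫ z, entropy (μ i) (fun x => f (update z i x)) ∂Measure.pi μ := by
  obtain ⟨hlog, hlog_eq⟩ := integral_mul_log_marginal hf hnn hfi hfl hEnt
  obtain ⟨hL, hL_le⟩ := integral_marginal_mul_div_le hf hnn hfi hi
  have hA : Integrable (fun z => f z * log (f z) - f z * log (marginal μ {i} f z))
      (Measure.pi μ) := hfl.sub hlog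
  have hA' : Integrable (fun z => f z * log (f z) - f z * log (marginal μ {i} f z) - f z)
      (Measure.pi μ) := hA.sub hfi
  refine ⟨fun z => f z * log (f z) - f z * log (marginal μ {i} f z) - f z
      + marginal μ {i} f z * marginal μ s f z / marginal μ (insert i s) f z,
    hA'.add hL, ?_, ?_⟩
  · filter_upwards [ae_marginal_pos hf hfi s, ae_marginal_pos hf hfi (insert i s),
      ae_marginal_pos hf hfi {i}] with z hs his hi'
    rcases (hnn z).eq_or_lt with h0 | hpos
    · simp only [← h0, zero_mul, sub_zero, zero_add]
      exact div_nonneg (mul_nonneg (marginal_nonneg _ _) (marginal_nonneg _ _))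
        (marginal_nonneg _ _)
    · exact mul_log_sub_log_le hpos (hs hpos) (his hpos) (hi' hpos)
  · beta_reduce
    rw [integral_add hA' hL, integral_sub hA hfi, integral_sub hfl hlog]
    linarith

theorem exists_mul_log_sub_log_marginal_le (hf : Measurable f) (hnn : ∀ z, 0 ≤ f z)
    (hfi : Integrable f (Measure.pi μ)) (hfl : Integrable (fun z => f z * log (f z)) (Measure.pi μ))
    (hEnt : ∀ i, Integrable (fun z => entropy (μ i) (fun x => f (update z i x))) (Measure.pi μ))
    (s : Finset ι) :
    ∃ R, Integrable R (Measure.pi μ) ∧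
      (∀ᵐ z ∂Measure.pi μ, f z * (log (f z) - log (marginal μ s f z)) ≤ R z) ∧
      ∫ z, R z ∂Measure.pi μ
        ≤ ∑ i ∈ s, ∫ z, entropy (μ i) (fun x => f (update z i x)) ∂Measure.pi μ := by
  induction s using Finset.induction_on with
  | empty => exact ⟨0, integrable_zero _ _ _, ae_of_all _ fun z => by simp [marginal_empty hnn],
      by simp⟩
  | insert i s hi ih =>
    obtain ⟨R, hR, hle, hint⟩ := ih
    obtain ⟨R', hR', hle', hint'⟩ :=
      exists_mul_log_marginal_sub_insert_le hf hnn hfi hfl hi (hEnt i)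
    refine ⟨R + R', hR.add hR', ?_, ?_⟩
    · filter_upwards [hle, hle'] with z h h'
      simp only [Pi.add_apply]
      linarith
    · rw [integral_add' hR hR', Finset.sum_insert hi]
      linarith

theorem entropy_pi_le_sum_integral_entropy_update (hf : Measurable f) (hnn : ∀ z, 0 ≤ f z)
    (hfi : Integrable f (Measure.pi μ)) (hfl : Integrable (fun z => f z * log (f z)) (Measure.pi μ))
    (hEnt : ∀ i, Integrable (fun z => entropy (μ i) (fun x => f (update z i x))) (Measure.pi μ)) :
    entropy (Measure.pi μ) f
      ≤ ∑ i, ∫ z, entropy (μ i) (fun x => f (update z i x)) ∂Measure.pi μ := by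
  obtain ⟨R, hR, hle, hint⟩ := exists_mul_log_sub_log_marginal_le hf hnn hfi hfl hEnt Finset.univ
  set B := ∫ z, f z ∂Measure.pi μ
  have hB : Integrable (fun z => f z * (log (f z) - log B)) (Measure.pi μ) := by
    simp_rw [mul_sub]
    exact hfl.sub (hfi.mul_const _)
  have hle' : ∀ᵐ z ∂Measure.pi μ, f z * (log (f z) - log B) ≤ R z := by
    simpa only [marginal_univ hf hnn] using hle
  calc entropy (Measure.pi μ) f = ∫ z, f z * (log (f z) - log B) ∂Measure.pi μ := by
        simp only [mul_sub]
        rw [integral_sub hfl (hfi.mul_const _), integral_mul_const, entropy]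
    _ ≤ ∫ z, R z ∂Measure.pi μ := integral_mono_ae hB hR hle'
    _ ≤ _ := hint

end Tensorization

end MeasureTheory

/-- Tensorization / subadditivity of entropy:
Ent[f(Z₁,…,Z_d)] ≤ E[∑ᵢ Entᵢ[f]] for independent Z₁,…,Z_d and f ≥ 0. -/
theorem entropy_tensorization {d : ℕ} {X : Fin d → Type*}
    [∀ i, MeasurableSpace (X i)]
    (μ : ∀ i, Measure (X i)) [∀ i, IsProbabilityMeasure (μ i)]
    (f : (∀ i, X i) → ℝ) (hmeas : Measurable f) (hnn : ∀ z, 0 ≤ f z)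
    (hint : Integrable f (Measure.pi μ))
    (hint2 : Integrable (fun z => f z * Real.log (f z)) (Measure.pi μ))
    (hint3 : Integrable (fun z => ∑ i,
        ((∫ x, f (Function.update z i x) * Real.log (f (Function.update z i x)) ∂(μ i))
          - (∫ x, f (Function.update z i x) ∂(μ i))
            * Real.log (∫ x, f (Function.update z i x) ∂(μ i)))) (Measure.pi μ)) :
    (∫ z, f z * Real.log (f z) ∂(Measure.pi μ))
        - (∫ z, f z ∂(Measure.pi μ)) * Real.log (∫ z, f z ∂(Measure.pi μ))
      ≤ ∫ z, (∑ i,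
          ((∫ x, f (Function.update z i x) * Real.log (f (Function.update z i x)) ∂(μ i))
            - (∫ x, f (Function.update z i x) ∂(μ i))
              * Real.log (∫ x, f (Function.update z i x) ∂(μ i)))) ∂(Measure.pi μ) := by
  have hEnt := integrable_entropy_update hmeas hnn hint hint2 hint3
  calc _ = entropy (Measure.pi μ) f := rfl
    _ ≤ ∑ i, ∫ z, entropy (μ i) (fun x => f (update z i x)) ∂Measure.pi μ :=
        entropy_pi_le_sum_integral_entropy_update hmeas hnn hint hint2 hEnt
    _ = _ := (integral_finsetSum _ fun i _ => hEnt i).symm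
end
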